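/- Fix c₀ ≠ 0, ε ∈ {−1, 1}, and 𝔥 : [−1, 1] → ℝ. For any y with 0 < |y| < 1, one has F_ε(0, y) = 0 if and only if ε𝔥(0)·|c₀|·|y| = √(1 − y²), which holds if and only if ε𝔥(0) > 0 and y = ±1/√(1 + c₀²𝔥(0)²). In other words, the nullcline curve F_ε = 0 can meet the axis x = 0 only at the points p_ε and −p_ε. -/

import Mathlib

/-!
On the axis the argument of `𝔥` is `0`, so `F_ε(0, y) = 2 (c₀ y)² (ε 𝔥(0) |c₀| |y| - √(1 - y²))`
and the first equivalence is immediate. For the second, `k |y| = √(1 - y²)` with `|y| < 1`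
forces `k > 0`, and squaring gives `y² (1 + k²) = 1`; here `k² = c₀² 𝔥(0)²` because `ε² = 1`.
-/

/-- The function `F_ε` whose zero set is the nullcline `Γ_ε` of the helicoidal
prescribed mean curvature system. -/
noncomputable def helicoidalNullclineF (c₀ ε : ℝ) (𝔥 : ℝ → ℝ) (x y : ℝ) : ℝ :=
  2 * ε * 𝔥 (x * y / Real.sqrt (c₀ ^ 2 * y ^ 2 + x ^ 2))
      * (x ^ 2 + c₀ ^ 2 * y ^ 2) ^ ((3 : ℝ) / 2)
    - (x ^ 2 + 2 * c₀ ^ 2 * y ^ 2) * Real.sqrt (1 - y ^ 2)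

open Real

lemma sq_rpow_three_halves (a : ℝ) : (a ^ 2) ^ ((3 : ℝ) / 2) = |a| ^ 3 := by
  rw [← sq_abs, ← rpow_natCast, ← rpow_mul (abs_nonneg a)]
  norm_num

lemma helicoidalNullclineF_zero_left (c₀ ε : ℝ) (𝔥 : ℝ → ℝ) (y : ℝ) :
    helicoidalNullclineF c₀ ε 𝔥 0 y
      = 2 * (c₀ * y) ^ 2 * (ε * 𝔥 0 * |c₀| * |y| - √(1 - y ^ 2)) := by
  simp only [helicoidalNullclineF, zero_mul, zero_div, ne_eq, OfNat.ofNat_ne_zero,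
    not_false_eq_true, zero_pow, zero_add]
  rw [← mul_pow, sq_rpow_three_halves]
  simp only [mul_pow, abs_mul, ← sq_abs c₀, ← sq_abs y]
  ring

lemma mul_abs_eq_sqrt_one_sub_sq_iff {k y : ℝ} (hy : |y| < 1) :
    k * |y| = √(1 - y ^ 2) ↔ 0 < k ∧ |y| = 1 / √(1 + k ^ 2) := by
  have hy2 : 0 < 1 - y ^ 2 := by nlinarith [sq_abs y, abs_nonneg y]
  have hs : 0 < √(1 + k ^ 2) := sqrt_pos.mpr (by positivity)
  have hs2 : √(1 + k ^ 2) ^ 2 = 1 + k ^ 2 := sq_sqrt (by positivity)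
  constructor
  · intro h
    have hk : 0 < k := pos_of_mul_pos_left (h ▸ sqrt_pos.mpr hy2) (abs_nonneg y)
    have hsq : (k * |y|) ^ 2 = 1 - y ^ 2 := by rw [h, sq_sqrt hy2.le]
    refine ⟨hk, ?_⟩
    rw [eq_div_iff hs.ne', ← pow_eq_one_iff_of_nonneg (by positivity) two_ne_zero, mul_pow,
      sq_abs, hs2]
    rw [mul_pow, sq_abs] at hsq
    linear_combination hsq
  · rintro ⟨hk, habs⟩
    have hysq : y ^ 2 = 1 / (1 + k ^ 2) := by rw [← sq_abs, habs, div_pow, hs2, one_pow]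
    have hrhs : 1 - y ^ 2 = (k * |y|) ^ 2 := by
      rw [mul_pow, sq_abs, hysq]
      field_simp
      ring
    rw [hrhs, sqrt_sq (by positivity)]

/-- For `0 < |y| < 1`, `F_ε(0, y) = 0` iff
`ε𝔥(0)|c₀||y| = √(1 − y²)`, iff `ε𝔥(0) > 0` and `y = ±1/√(1 + c₀²𝔥(0)²)`;
so the nullcline meets the axis `x = 0` only at `p_ε` and `−p_ε`. -/
theorem helicoidal_nullcline_meets_axis (c₀ ε : ℝ) (hc₀ : c₀ ≠ 0)
    (hε : ε = 1 ∨ ε = -1) (𝔥 : ℝ → ℝ) :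
    ∀ y : ℝ, 0 < |y| → |y| < 1 →
      ((helicoidalNullclineF c₀ ε 𝔥 0 y = 0 ↔
          ε * 𝔥 0 * |c₀| * |y| = Real.sqrt (1 - y ^ 2)) ∧
       (helicoidalNullclineF c₀ ε 𝔥 0 y = 0 ↔
          (0 < ε * 𝔥 0 ∧
            (y = 1 / Real.sqrt (1 + c₀ ^ 2 * (𝔥 0) ^ 2) ∨
             y = -(1 / Real.sqrt (1 + c₀ ^ 2 * (𝔥 0) ^ 2)))))) := by
  intro y hy0 hy1
  have hc₀y : 2 * (c₀ * y) ^ 2 ≠ 0 := by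
    have : y ≠ 0 := abs_pos.mp hy0
    positivity
  have axis : helicoidalNullclineF c₀ ε 𝔥 0 y = 0 ↔
      ε * 𝔥 0 * |c₀| * |y| = √(1 - y ^ 2) := by
    rw [helicoidalNullclineF_zero_left, mul_eq_zero, or_iff_right hc₀y, sub_eq_zero]
  have hk : (ε * 𝔥 0 * |c₀|) ^ 2 = c₀ ^ 2 * 𝔥 0 ^ 2 := by
    have hε2 : ε ^ 2 = 1 := by rcases hε with rfl | rfl <;> norm_num
    rw [mul_pow, mul_pow, hε2, sq_abs]
    ring
  refine ⟨axis, axis.trans ?_⟩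
  rw [mul_abs_eq_sqrt_one_sub_sq_iff hy1, hk, mul_pos_iff_of_pos_right (abs_pos.mpr hc₀),
    abs_eq (by positivity)]
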